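/- Let X be an oriented graph on a finite vertex set V whose adjacency matrix A lies in the Bose–Mesner algebra of an association scheme 𝒜 on V, and suppose perfect state transfer occurs from a vertex a to a distinct vertex b at time τ > 0. Then a is periodic (there exists t > 0 with U(t)e_a = λ e_a for some |λ| = 1), and perfect state transfer occurs between every pair of distinct vertices of S_a; moreover S_b = S_a for every b ∈ S_a. -/

import Mathlib

open Matrix

/-- The transition matrix `U(t) = exp(t A)`. -/
noncomputable def transU {V : Type*} [Fintype V] [DecidableEq V]
    (A : Matrix V V ℂ) (t : ℝ) : Matrix V V ℂ :=
  NormedSpace.exp ((t : ℂ) • A)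

/-- Perfect state transfer from `a` to `b` at time `t`. -/
def PST {V : Type*} [Fintype V] [DecidableEq V]
    (A : Matrix V V ℂ) (a b : V) (t : ℝ) : Prop :=
  ∃ lam : ℂ, ‖lam‖ = 1 ∧ (transU A t) *ᵥ (Pi.single a 1) = lam • (Pi.single b 1 : V → ℂ)

/-- `S_a`: the set of vertices `b` such that PST occurs from `a` to `b` at some positive time. -/
def Sset {V : Type*} [Fintype V] [DecidableEq V]
    (A : Matrix V V ℂ) (a : V) : Set V :=
  {b | ∃ t : ℝ, 0 < t ∧ PST A a b t}

/-- `M : Fin (d+1) → Matrix V V ℂ` is an association scheme on `V`. -/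
structure IsAssocScheme {V : Type*} [Fintype V] [DecidableEq V] {d : ℕ}
    (M : Fin (d + 1) → Matrix V V ℂ) : Prop where
  h_zero : M 0 = 1
  h_entries : ∀ j i k, M j i k = 0 ∨ M j i k = 1
  h_sum : ∑ j, M j = Matrix.of (fun _ _ => (1 : ℂ))
  h_transpose : ∀ j, ∃ j', (M j)ᵀ = M j'
  h_comm : ∀ i j, M i * M j = M j * M i
  h_closed : ∀ i j, M i * M j ∈ Submodule.span ℂ (Set.range M)

/-- `A` is the adjacency matrix of an oriented graph. -/
def IsOrientedAdjMatrix {V : Type*} [Fintype V] [DecidableEq V]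
    (A : Matrix V V ℂ) : Prop :=
  Aᵀ = -A ∧ ∀ i j, A i j = 0 ∨ A i j = 1 ∨ A i j = -1


set_option linter.unusedSectionVars false

section helpers
variable {V : Type*} [Fintype V] [DecidableEq V]

lemma exists_unique_one {ι : Type*} [Fintype ι] [DecidableEq ι] (t : ι → ℂ)
    (h01 : ∀ i, t i = 0 ∨ t i = 1) (hsum : ∑ i, t i = 1) : ∃! i, t i = 1 := by
  have hre : ∑ i, (t i).re = 1 := by
    have := congrArg Complex.re hsum
    simpa [Complex.re_sum] using this
  have hnn : ∀ i, 0 ≤ (t i).re := by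
    intro i; rcases h01 i with h | h <;> simp [h]
  obtain ⟨i, hi⟩ : ∃ i, t i = 1 := by
    by_contra hc
    push_neg at hc
    have : ∀ i, t i = 0 := fun i => (h01 i).resolve_right (hc i)
    simp [this] at hsum
  refine ⟨i, hi, fun j hj => ?_⟩
  by_contra hne
  have h1 : ∑ k, (t k).re = (t i).re + ∑ k ∈ Finset.univ.erase i, (t k).re :=
    (Finset.add_sum_erase _ _ (Finset.mem_univ i)).symm
  have h2 : (t j).re ≤ ∑ k ∈ Finset.univ.erase i, (t k).re :=
    Finset.single_le_sum (fun k _ => hnn k) (Finset.mem_erase.mpr ⟨hne, Finset.mem_univ j⟩)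
  rw [hre, hi] at h1
  rw [hj] at h2
  simp at h1 h2
  linarith

variable {d : ℕ} {M : Fin (d + 1) → Matrix V V ℂ}

lemma class_exu (hM : ∀ j i k, M j i k = 0 ∨ M j i k = 1)
    (hsum : ∑ j, M j = Matrix.of (fun _ _ => (1 : ℂ))) (x y : V) :
    ∃! j, M j x y = 1 := by
  refine exists_unique_one _ (fun j => hM j x y) ?_
  have := congrFun (congrFun (congrArg (fun N => N) hsum) x) y
  simpa [Matrix.sum_apply] using this

lemma span_constant (hM : ∀ j i k, M j i k = 0 ∨ M j i k = 1)
    (hsum : ∑ j, M j = Matrix.of (fun _ _ => (1 : ℂ)))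
    {N : Matrix V V ℂ} (hN : N ∈ Submodule.span ℂ (Set.range M))
    {j : Fin (d+1)} {x y x' y' : V} (h1 : M j x y = 1) (h2 : M j x' y' = 1) :
    N x y = N x' y' := by
  induction hN using Submodule.span_induction with
  | mem m hm =>
      obtain ⟨i, rfl⟩ := hm
      by_cases hij : i = j
      · subst hij; rw [h1, h2]
      · have u1 := (class_exu hM hsum x y).choose_spec
        have u2 := (class_exu hM hsum x' y').choose_spec
        have e1 : j = (class_exu hM hsum x y).choose := u1.2 j h1
        have e2 : j = (class_exu hM hsum x' y').choose := u2.2 j h2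
        have hz1 : M i x y = 0 := by
          rcases hM i x y with h | h
          · exact h
          · exact absurd (u1.2 i h ▸ e1.symm ▸ rfl : i = j) hij
        have hz2 : M i x' y' = 0 := by
          rcases hM i x' y' with h | h
          · exact h
          · exact absurd (u2.2 i h ▸ e2.symm ▸ rfl : i = j) hij
        rw [hz1, hz2]
  | zero => simp
  | add p q hp hq ihp ihq => simp [Matrix.add_apply, ihp, ihq]
  | smul c p hp ihp => simp [Matrix.smul_apply, ihp]

lemma linesum (hsum : ∑ j, M j = Matrix.of (fun _ _ => (1 : ℂ)))
    (hcomm : ∀ i j, M i * M j = M j * M i) (j : Fin (d+1)) (x y : V) :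
    ∑ z, M j x z = ∑ z, M j z y := by
  have h : M j * Matrix.of (fun _ _ => (1 : ℂ)) = Matrix.of (fun _ _ => (1 : ℂ)) * M j := by
    rw [← hsum, Finset.mul_sum, Finset.sum_mul]
    exact Finset.sum_congr rfl fun i _ => hcomm j i
  have := congrFun (congrFun h x) y
  simpa [Matrix.mul_apply] using this

lemma exp_mem_span (S : Submodule ℂ (Matrix V V ℂ)) (hone : (1 : Matrix V V ℂ) ∈ S)
    (hmul : ∀ x ∈ S, ∀ y ∈ S, x * y ∈ S) {x : Matrix V V ℂ} (hx : x ∈ S) :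
    NormedSpace.exp x ∈ S := by
  letI : SeminormedRing (Matrix V V ℂ) := Matrix.linftyOpSemiNormedRing
  letI : NormedRing (Matrix V V ℂ) := Matrix.linftyOpNormedRing
  letI : NormedAlgebra ℂ (Matrix V V ℂ) := Matrix.linftyOpNormedAlgebra
  have hpow : ∀ n : ℕ, x ^ n ∈ S := by
    intro n; induction n with
    | zero => simpa using hone
    | succ n ih => rw [pow_succ]; exact hmul _ ih _ hx
  have hsum := NormedSpace.exp_series_hasSum_exp' (𝕂 := ℂ) x
  have hclosed : IsClosed (S : Set (Matrix V V ℂ)) := Submodule.closed_of_finiteDimensional S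
  exact hclosed.mem_of_tendsto hsum
    (Filter.Eventually.of_forall fun s => Submodule.sum_mem S fun n _ =>
      Submodule.smul_mem S _ (hpow n))

end helpers

section basics
variable {V : Type*} [Fintype V] [DecidableEq V] (A : Matrix V V ℂ)

lemma transU_add (s t : ℝ) : transU A (s + t) = transU A s * transU A t := by
  unfold transU
  rw [show ((s + t : ℝ) : ℂ) • A = (s : ℂ) • A + (t : ℂ) • A by push_cast; rw [add_smul]]
  exact Matrix.exp_add_of_commute _ _ (((Commute.refl A).smul_left _).smul_right _)

lemma transU_zero : transU A 0 = 1 := by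
  unfold transU; simp [NormedSpace.exp_zero]

lemma transU_neg_mul (t : ℝ) : transU A (-t) * transU A t = 1 := by
  rw [← transU_add, neg_add_cancel, transU_zero]


lemma PST.comp {A : Matrix V V ℂ} {x y z : V} {s r : ℝ}
    (h1 : PST A x y s) (h2 : PST A y z r) : PST A x z (s + r) := by
  obtain ⟨l1, hl1, he1⟩ := h1
  obtain ⟨l2, hl2, he2⟩ := h2
  refine ⟨l1 * l2, by simp [hl1, hl2], ?_⟩
  rw [show s + r = r + s from add_comm s r, transU_add, ← mulVec_mulVec, he1,
    Matrix.mulVec_smul, he2, smul_smul, mul_comm]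

lemma PST.inv {A : Matrix V V ℂ} {x y : V} {s : ℝ}
    (h : PST A x y s) : PST A y x (-s) := by
  obtain ⟨l, hl, he⟩ := h
  have hl0 : l ≠ 0 := by intro h0; simp [h0] at hl
  refine ⟨l⁻¹, by simp [hl], ?_⟩
  have := congrArg (fun v => transU A (-s) *ᵥ v) he
  simp only [Matrix.mulVec_smul, mulVec_mulVec] at this
  rw [show transU A (-s) * transU A s = 1 by
      rw [← transU_add, neg_add_cancel, transU_zero], one_mulVec] at this
  rw [eq_inv_smul_iff₀ hl0]
  exact this.symm


end basics

set_option maxHeartbeats 1000000 in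
lemma periodic_of_pst {V : Type*} [Fintype V] [DecidableEq V] {d : ℕ}
    (M : Fin (d + 1) → Matrix V V ℂ) (hM : IsAssocScheme M)
    (A : Matrix V V ℂ) (hA : IsOrientedAdjMatrix A)
    (hAin : A ∈ Submodule.span ℂ (Set.range M))
    (a b : V) (τ : ℝ) (hτ : 0 < τ) (hpst : PST A a b τ) :
    ∃ t : ℝ, 0 < t ∧ PST A a a t := by
  classical
  set S := Submodule.span ℂ (Set.range M) with hS
  have hone : (1 : Matrix V V ℂ) ∈ S := hM.h_zero ▸ Submodule.subset_span ⟨0, rfl⟩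
  have hmulS : ∀ x ∈ S, ∀ y ∈ S, x * y ∈ S := by
    intro x hx
    induction hx using Submodule.span_induction with
    | mem m hm =>
        intro y hy
        induction hy using Submodule.span_induction with
        | mem m' hm' =>
            obtain ⟨i, rfl⟩ := hm; obtain ⟨j, rfl⟩ := hm'
            exact hM.h_closed i j
        | zero => simp
        | add p q hp hq ihp ihq => rw [mul_add]; exact add_mem ihp ihq
        | smul c p hp ihp => rw [mul_smul_comm]; exact Submodule.smul_mem _ _ ihp
    | zero => intro y hy; simp
    | add p q hp hq ihp ihq => intro y hy; rw [add_mul]; exact add_mem (ihp y hy) (ihq y hy)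
    | smul c p hp ihp => intro y hy; rw [smul_mul_assoc]; exact Submodule.smul_mem _ _ (ihp y hy)
  set N := transU A τ with hNdef
  have hNS : N ∈ S := exp_mem_span S hone hmulS (Submodule.smul_mem S _ hAin)
  obtain ⟨lam, hlam, he⟩ := hpst
  have hlam0 : lam ≠ 0 := by intro h0; rw [h0] at hlam; simp at hlam
  have hcol : ∀ x, N x a = if x = b then lam else 0 := by
    intro x
    have := congrFun he x
    simp only [Matrix.mulVec_single_one, Matrix.col_apply, Pi.smul_apply, Pi.single_apply, smul_eq_mul,
      mul_one] at this
    rw [hNdef, this]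
    by_cases hx : x = b <;> simp [hx]
  have hNba : N b a = lam := by rw [hcol]; simp
  obtain ⟨js, hjs, -⟩ := class_exu hM.h_entries hM.h_sum b a
  -- every 1 in column a of class js is at row b
  have hcolclass : ∀ x, M js x a = 1 → x = b := by
    intro x hx
    by_contra hxb
    have hc := span_constant hM.h_entries hM.h_sum hNS hx hjs
    rw [hNba] at hc
    have : N x a = 0 := by rw [hcol]; simp [hxb]
    exact hlam0 (by rw [← hc, this])
  have hcolsum_a : ∑ z, M js z a = 1 := by
    rw [Finset.sum_eq_single b]
    · exact hjs
    · intro z _ hz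
      rcases hM.h_entries js z a with h | h
      · exact h
      · exact absurd (hcolclass z h) hz
    · simp
  have hrowsum : ∀ x, ∑ z, M js x z = 1 := fun x =>
    (linesum hM.h_sum hM.h_comm js x a).trans hcolsum_a
  have hcolsum : ∀ y, ∑ z, M js z y = 1 := fun y =>
    (linesum hM.h_sum hM.h_comm js a y).symm.trans (hrowsum a)
  have hexuC : ∀ y, ∃! x, M js x y = 1 := fun y =>
    exists_unique_one (fun x => M js x y) (fun x => hM.h_entries js x y) (hcolsum y)
  have hexuR : ∀ x, ∃! y, M js x y = 1 := fun x =>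
    exists_unique_one (fun y => M js x y) (fun y => hM.h_entries js x y) (hrowsum x)
  set σ : V → V := fun y => (hexuC y).choose with hσdef
  have hσ : ∀ y, M js (σ y) y = 1 := fun y => (hexuC y).choose_spec.1
  have hσu : ∀ y x, M js x y = 1 → x = σ y := fun y x h => (hexuC y).choose_spec.2 x h
  have hinj : Function.Injective σ := by
    intro y y' h
    have h1 : M js (σ y) y = 1 := hσ y
    have h2 : M js (σ y) y' = 1 := by rw [h]; exact hσ y'
    exact ((hexuR (σ y)).choose_spec.2 y h1).trans ((hexuR (σ y)).choose_spec.2 y' h2).symm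
  -- N is unitary
  have hAH : Aᴴ = -A := by
    ext i j
    have h1 : A j i = -A i j := by
      have := congrFun (congrFun hA.1 i) j
      simpa [Matrix.transpose_apply] using this
    simp only [Matrix.conjTranspose_apply, Matrix.neg_apply, h1, map_neg, neg_inj]
    rcases hA.2 i j with h | h | h <;> simp [h]
  have hNH : Nᴴ = transU A (-τ) := by
    rw [hNdef]
    unfold transU
    rw [← Matrix.exp_conjTranspose]
    congr 1
    rw [Matrix.conjTranspose_smul, hAH]
    push_cast
    rw [Complex.star_def, Complex.conj_ofReal, smul_neg, neg_smul]
  have hunit : Nᴴ * N = 1 := by rw [hNH, hNdef]; exact transU_neg_mul A τ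
  have hnormcol : ∀ y, ∑ x, Complex.normSq (N x y) = 1 := by
    intro y
    have h0 := congrFun (congrFun hunit y) y
    simp only [Matrix.mul_apply, Matrix.conjTranspose_apply, Matrix.one_apply_eq] at h0
    have h1 : ∑ x, (Complex.normSq (N x y) : ℂ) = 1 := by
      rw [← h0]
      exact Finset.sum_congr rfl fun x _ => Complex.normSq_eq_conj_mul_self
    have := congrArg Complex.re h1
    simpa [Complex.re_sum] using this
  have hnormlam : Complex.normSq lam = 1 := by
    have : ‖lam‖ ^ 2 = 1 := by rw [hlam]; norm_num
    rwa [← Complex.sq_norm]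
  have hdiag : ∀ y, N (σ y) y = lam := by
    intro y
    rw [span_constant hM.h_entries hM.h_sum hNS (hσ y) hjs, hNba]
  have hzero : ∀ x y, x ≠ σ y → N x y = 0 := by
    intro x y hxy
    have hs := hnormcol y
    have hsplit : ∑ x, Complex.normSq (N x y)
        = Complex.normSq (N (σ y) y) + ∑ x ∈ Finset.univ.erase (σ y), Complex.normSq (N x y) :=
      (Finset.add_sum_erase _ _ (Finset.mem_univ _)).symm
    rw [hdiag y, hnormlam, hs] at hsplit
    have hrest : ∑ x ∈ Finset.univ.erase (σ y), Complex.normSq (N x y) = 0 := by linarith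
    have := (Finset.sum_eq_zero_iff_of_nonneg
      (fun k _ => Complex.normSq_nonneg (N k y))).mp hrest x
      (Finset.mem_erase.mpr ⟨hxy, Finset.mem_univ x⟩)
    exact Complex.normSq_eq_zero.mp this
  have hNact : ∀ y, N *ᵥ Pi.single y 1 = lam • (Pi.single (σ y) 1 : V → ℂ) := by
    intro y
    funext x
    simp only [Matrix.mulVec_single_one, Matrix.col_apply, mul_one, Pi.smul_apply, Pi.single_apply, smul_eq_mul]
    by_cases hx : x = σ y
    · rw [hx, hdiag y]; simp
    · rw [hzero x y hx]; simp [hx]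
  have hiter : ∀ k : ℕ, transU A (k * τ) *ᵥ Pi.single a 1
      = lam ^ k • (Pi.single (σ^[k] a) 1 : V → ℂ) := by
    intro k
    induction k with
    | zero =>
      rw [show ((0 : ℕ) : ℝ) * τ = 0 by simp, transU_zero, Matrix.one_mulVec]
      simp
    | succ k ih =>
      have hst : ((k + 1 : ℕ) : ℝ) * τ = τ + (k : ℝ) * τ := by push_cast; ring
      rw [hst, transU_add, ← Matrix.mulVec_mulVec, ih, Matrix.mulVec_smul, ← hNdef,
        hNact, Function.iterate_succ_apply', smul_smul, pow_succ]
  -- σ has finite order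
  have hbij : Function.Bijective σ := Finite.injective_iff_bijective.mp hinj
  set e : Equiv.Perm V := Equiv.ofBijective σ hbij with hedef
  have hn : 0 < orderOf e := orderOf_pos e
  have hfix : σ^[orderOf e] a = a := by
    have h1 : (⇑e)^[orderOf e] = ⇑(e ^ orderOf e) := Equiv.Perm.iterate_eq_pow e _
    have h2 : (⇑e)^[orderOf e] a = a := by rw [h1, pow_orderOf_eq_one]; rfl
    exact h2
  refine ⟨(orderOf e : ℝ) * τ, by positivity, lam ^ orderOf e, by simp [norm_pow, hlam], ?_⟩
  rw [hiter (orderOf e), hfix]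



/-- if PST occurs from `a` to a distinct vertex `b` at time `τ > 0`,
then `a` is periodic, PST occurs between every pair of distinct vertices of `S_a`, and
`S_b = S_a` for every `b ∈ S_a`. -/
theorem stmt19 {V : Type*} [Fintype V] [DecidableEq V] {d : ℕ}
    (M : Fin (d + 1) → Matrix V V ℂ) (hM : IsAssocScheme M)
    (A : Matrix V V ℂ) (hA : IsOrientedAdjMatrix A)
    (hAin : A ∈ Submodule.span ℂ (Set.range M))
    (a b : V) (hab : a ≠ b) (τ : ℝ) (hτ : 0 < τ) (hpst : PST A a b τ) :
    (∃ t : ℝ, 0 < t ∧ PST A a a t) ∧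
    (∀ c ∈ Sset A a, ∀ c' ∈ Sset A a, c ≠ c' → ∃ t : ℝ, 0 < t ∧ PST A c c' t) ∧
    (∀ c ∈ Sset A a, Sset A c = Sset A a) := by
  obtain ⟨rho, hrho, hperiodic⟩ := periodic_of_pst M hM A hA hAin a b τ hτ hpst
  have hper : ∀ k : ℕ, PST A a a ((k + 1 : ℕ) * rho) := by
    intro k
    induction k with
    | zero => simpa using hperiodic
    | succ k ih =>
      have hst : ((k + 1 + 1 : ℕ) : ℝ) * rho = ((k + 1 : ℕ) : ℝ) * rho + rho := by
        push_cast; ring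
      rw [hst]
      exact ih.comp hperiodic
  have hbig : ∀ T : ℝ, ∃ p, T < p ∧ PST A a a p := by
    intro T
    obtain ⟨k, hk⟩ := exists_nat_gt (T / rho)
    refine ⟨((k + 1 : ℕ) : ℝ) * rho, ?_, hper k⟩
    have h1 : T < (k : ℝ) * rho := by
      rw [div_lt_iff₀ hrho] at hk
      exact hk
    push_cast
    nlinarith
  have key : ∀ c ∈ Sset A a, ∀ c' ∈ Sset A a, ∃ t : ℝ, 0 < t ∧ PST A c c' t := by
    rintro c ⟨t1, ht1, hp1⟩ c' ⟨t2, ht2, hp2⟩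
    obtain ⟨p, hp, hpp⟩ := hbig t1
    exact ⟨-t1 + (p + t2), by linarith, (hp1.inv).comp (hpp.comp hp2)⟩
  refine ⟨⟨rho, hrho, hperiodic⟩, fun c hc c' hc' _ => key c hc c' hc', ?_⟩
  intro c hc
  obtain ⟨t1, ht1, hp1⟩ := hc
  ext x
  constructor
  · rintro ⟨s, hs, hps⟩
    exact ⟨t1 + s, by linarith, hp1.comp hps⟩
  · intro hx
    exact key c ⟨t1, ht1, hp1⟩ x hx
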